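/- arXiv:2404.11307 — 2 statements merged into one kernel-verified Lean document; each statement's English description precedes it below -/
import Mathlib

section
/- Let G be a finite abelian group and S a zero-sum free sequence over G, and let S₁, …, S_t be pairwise disjoint subsequences of S. Then |Σ(S)| ≥ |Σ(S₁)| + |Σ(S₂)| + ⋯ + |Σ(S_t)|. -/
/-- Set of sums of nonempty subsequences of `S`. -/
def subSums {G : Type*} [AddCommMonoid G] (S : Multiset G) : Set G :=
  {x | ∃ T : Multiset G, T ≤ S ∧ T ≠ 0 ∧ T.sum = x}

/-- Set of sums of subsequences of `S` of length exactly `k`. -/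
def sumsLen {G : Type*} [AddCommMonoid G] (k : ℕ) (S : Multiset G) : Set G :=
  {x | ∃ T : Multiset G, T ≤ S ∧ Multiset.card T = k ∧ T.sum = x}

/-- Set of sums of subsequences of `S` of length at least `k`. -/
def sumsGe {G : Type*} [AddCommMonoid G] (k : ℕ) (S : Multiset G) : Set G :=
  {x | ∃ T : Multiset G, T ≤ S ∧ k ≤ Multiset.card T ∧ T.sum = x}


/-!
Splitting `S = A · B`, the sets `Σ(A)` and `σ(A) + Σ(B)` both lie in `Σ(A · B)`, and they are
disjoint as long as `A · B` is zero-sum free: if `σ(T) = σ(A) + σ(U)` with `T ∣ A` and nonempty `U ∣ B`,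
then `(A T⁻¹) · U` is a nonempty zero-sum subsequence. Hence `|Σ(A · B)| ≥ |Σ(A)| + |Σ(B)|`, and the
theorem follows by induction on `t`, since `Σ` is monotone and zero-sum freeness passes to
subsequences.
-/

section AddCommMonoid

variable {G : Type*} [AddCommMonoid G]

theorem subSums_mono {S T : Multiset G} (h : T ≤ S) : subSums T ⊆ subSums S :=
  fun _ ⟨U, hU, hU0, hsum⟩ => ⟨U, hU.trans h, hU0, hsum⟩

theorem subSums_finite (S : Multiset G) : (subSums S).Finite := by
  classical
  refine (S.powerset.map Multiset.sum).toFinset.finite_toSet.subset ?_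
  rintro _ ⟨T, hT, -, rfl⟩
  simpa using ⟨T, hT, rfl⟩

end AddCommMonoid

section AddCancelCommMonoid

variable {G : Type*} [AddCancelCommMonoid G]

theorem disjoint_subSums_add_sum_image {A B : Multiset G} (h : (0 : G) ∉ subSums (A + B)) :
    Disjoint (subSums A) ((A.sum + ·) '' subSums B) := by
  rw [Set.disjoint_left]
  rintro _ ⟨T, hTA, -, rfl⟩ ⟨_, ⟨U, hUB, hU0, rfl⟩, hTU⟩
  obtain ⟨W, rfl⟩ := Multiset.le_iff_exists_add.mp hTA
  refine h ⟨W + U, add_le_add (Multiset.le_add_left W T) hUB, by simp [hU0], ?_⟩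
  have : T.sum + (W.sum + U.sum) = T.sum + 0 := by
    rw [add_zero, ← add_assoc, ← Multiset.sum_add]
    exact hTU
  rw [Multiset.sum_add]
  exact add_left_cancel this

theorem subSums_union_add_sum_image_subset (A B : Multiset G) :
    subSums A ∪ (A.sum + ·) '' subSums B ⊆ subSums (A + B) := by
  rintro _ (hx | ⟨_, ⟨U, hUB, hU0, rfl⟩, rfl⟩)
  · exact subSums_mono (Multiset.le_add_right A B) hx
  · exact ⟨A + U, add_le_add_right hUB A, by simp [hU0], Multiset.sum_add A U⟩

theorem ncard_subSums_add_le {A B : Multiset G} (h : (0 : G) ∉ subSums (A + B)) :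
    (subSums A).ncard + (subSums B).ncard ≤ (subSums (A + B)).ncard := by
  calc (subSums A).ncard + (subSums B).ncard
      = (subSums A).ncard + ((A.sum + ·) '' subSums B).ncard := by
        rw [Set.ncard_image_of_injective _ (add_right_injective A.sum)]
    _ = (subSums A ∪ (A.sum + ·) '' subSums B).ncard :=
        (Set.ncard_union_eq (disjoint_subSums_add_sum_image h) (subSums_finite A)
          ((subSums_finite B).image _)).symm
    _ ≤ (subSums (A + B)).ncard :=
        Set.ncard_le_ncard (subSums_union_add_sum_image_subset A B) (subSums_finite _)

theorem sum_ncard_subSums_le_ncard_subSums_sum (L : List (Multiset G))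
    (h : (0 : G) ∉ subSums L.sum) :
    (L.map fun T => (subSums T).ncard).sum ≤ (subSums L.sum).ncard := by
  induction L with
  | nil => simp
  | cons A L ih =>
    rw [List.sum_cons] at h ⊢
    rw [List.map_cons, List.sum_cons]
    have hL : (0 : G) ∉ subSums L.sum := fun h0 => h (subSums_mono (Multiset.le_add_left _ _) h0)
    exact (Nat.add_le_add_left (ih hL) _).trans (ncard_subSums_add_le h)

end AddCancelCommMonoid

theorem stmt2_general {G : Type*} [AddCommGroup G]
    (S : Multiset G) (hS : (0 : G) ∉ subSums S)
    (L : List (Multiset G)) (hL : L.sum ≤ S) :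
    (subSums S).ncard ≥ (L.map fun T => (subSums T).ncard).sum :=
  calc (L.map fun T => (subSums T).ncard).sum
      ≤ (subSums L.sum).ncard :=
        sum_ncard_subSums_le_ncard_subSums_sum L fun h0 => hS (subSums_mono hL h0)
    _ ≤ (subSums S).ncard := Set.ncard_le_ncard (subSums_mono hL) (subSums_finite S)

theorem stmt2 {G : Type*} [AddCommGroup G] [Fintype G]
    (S : Multiset G) (hS : (0 : G) ∉ subSums S)
    (L : List (Multiset G)) (hL : L.sum ≤ S) :
    (subSums S).ncard ≥ (L.map fun T => (subSums T).ncard).sum :=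
  stmt2_general S hS L hL
end

section
/- Let G be a finite abelian group, g ∈ G∖{0} with ord(g) ≥ |S|+2 and |S| ≥ 3, and let S = g^{|S|−1}·(2g). Then S is zero-sum free and |Σ(S)| = |S| + |supp(S)| − 1 = |S| + 1. -/
/-! A nonempty subsequence of `g^(m-1)·(2g)` sums to `j•g` for some `1 ≤ j ≤ m + 1`, and every
such `j` occurs (using the term `2g` for `j ≥ m`). Since `m + 1 < ord g`, these `m + 1` multiples
of `g` are pairwise distinct and nonzero. -/

open Multiset

section SubSums

variable {G : Type*} [AddCommMonoid G]

theorem subSums_eq_powerset (S : Multiset G) :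
    subSums S = {x | ∃ T ∈ S.powerset, T ≠ 0 ∧ T.sum = x} := by
  simp only [subSums, mem_powerset]

theorem subSums_cons (a : G) (S : Multiset G) :
    subSums (a ::ₘ S) = insert a (subSums S ∪ (a + ·) '' subSums S) := by
  ext x
  simp only [subSums_eq_powerset, powerset_cons, mem_add, mem_map, Set.mem_insert_iff,
    Set.mem_union, Set.mem_image, Set.mem_ofPred_eq]
  constructor
  · rintro ⟨T, hT | ⟨U, hU, rfl⟩, hT0, rfl⟩
    · exact Or.inr (Or.inl ⟨T, hT, hT0, rfl⟩)
    · rcases eq_or_ne U 0 with rfl | hU0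
      · exact Or.inl (by simp)
      · exact Or.inr (Or.inr ⟨U.sum, ⟨U, hU, hU0, rfl⟩, (sum_cons a U).symm⟩)
  · rintro (hx | ⟨T, hT, hT0, rfl⟩ | ⟨_, ⟨T, hT, hT0, rfl⟩, rfl⟩)
    · exact ⟨a ::ₘ 0, Or.inr ⟨0, zero_mem_powerset S, rfl⟩, cons_ne_zero, by simp [hx]⟩
    · exact ⟨T, Or.inl hT, hT0, rfl⟩
    · exact ⟨a ::ₘ T, Or.inr ⟨T, hT, rfl⟩, cons_ne_zero, sum_cons a T⟩

theorem subSums_replicate (n : ℕ) (g : G) :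
    subSums (replicate n g) = (· • g) '' Set.Icc 1 n := by
  ext x
  simp only [subSums, le_replicate_iff, Set.mem_image, Set.mem_Icc, Set.mem_ofPred_eq]
  constructor
  · rintro ⟨_, ⟨k, hk, rfl⟩, hk0, rfl⟩
    exact ⟨k, ⟨Nat.one_le_iff_ne_zero.2 fun h => hk0 (h ▸ replicate_zero g), hk⟩,
      (sum_replicate k g).symm⟩
  · rintro ⟨k, ⟨hk0, hk⟩, rfl⟩
    refine ⟨replicate k g, ⟨k, hk, rfl⟩, fun h => ?_, sum_replicate k g⟩
    have := congrArg card h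
    rw [card_replicate, card_zero] at this
    omega

theorem subSums_cons_two_nsmul_replicate {n : ℕ} (hn : 1 ≤ n) (g : G) :
    subSums (2 • g ::ₘ replicate n g) = (· • g) '' Set.Icc 1 (n + 2) := by
  ext x
  simp only [subSums_cons, subSums_replicate, Set.mem_insert_iff, Set.mem_union,
    Set.image_image, Set.mem_image, Set.mem_Icc, ← add_nsmul]
  constructor
  · rintro (rfl | ⟨j, hj, rfl⟩ | ⟨j, hj, rfl⟩)
    · exact ⟨2, by omega, rfl⟩
    · exact ⟨j, by omega, rfl⟩
    · exact ⟨2 + j, by omega, rfl⟩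
  · rintro ⟨j, hj, rfl⟩
    by_cases hj2 : j = 2
    · exact Or.inl (by rw [hj2])
    by_cases hjn : j ≤ n
    · exact Or.inr (Or.inl ⟨j, ⟨hj.1, hjn⟩, rfl⟩)
    · exact Or.inr (Or.inr ⟨j - 2, by omega, by rw [Nat.add_sub_cancel' (by omega)]⟩)

end SubSums

section Multiples

variable {G : Type*} [AddMonoid G] {g : G} {n : ℕ}

theorem ncard_image_nsmul_Icc (hn : n < addOrderOf g) :
    ((· • g) '' Set.Icc 1 n).ncard = n := by
  rw [(nsmul_injOn_Iio_addOrderOf.mono fun j hj => hj.2.trans_lt hn).ncard_image,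
    ← Finset.coe_Icc, Set.ncard_coe_finset, Nat.card_Icc, Nat.add_sub_cancel]

theorem zero_notMem_image_nsmul_Icc (hn : n < addOrderOf g) :
    (0 : G) ∉ (· • g) '' Set.Icc 1 n := by
  rintro ⟨j, hj, hj0⟩
  have hjg : j < addOrderOf g := hj.2.trans_lt hn
  refine nsmul_injOn_Iio_addOrderOf.ne hjg ((Nat.zero_le j).trans_lt hjg)
    (Nat.one_le_iff_ne_zero.1 hj.1) ?_
  simpa using hj0

end Multiples

theorem stmt9_general {G : Type*} [AddCommGroup G] [DecidableEq G]
    (m : ℕ) (hm : 3 ≤ m) (g : G) (hord : m + 2 ≤ addOrderOf g)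
    (S : Multiset G) (hS : S = Multiset.replicate (m - 1) g + {2 • g}) :
    (0 : G) ∉ subSums S ∧
      (subSums S).ncard + 1 = Multiset.card S + S.toFinset.card ∧
      (subSums S).ncard = m + 1 := by
  obtain ⟨n, rfl⟩ : ∃ n, m = n + 1 := ⟨m - 1, by omega⟩
  rw [Nat.add_sub_cancel, add_comm, singleton_add] at hS
  have hsums : subSums S = (· • g) '' Set.Icc 1 (n + 2) :=
    hS ▸ subSums_cons_two_nsmul_replicate (by omega) g
  have hcard : (subSums S).ncard = n + 2 := hsums ▸ ncard_image_nsmul_Icc (by omega)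
  have htwo : 2 • g ≠ g := by
    simpa using (nsmul_injOn_Iio_addOrderOf (x := g)).ne (x := 2) (y := 1)
      (Set.mem_Iio.2 (by omega)) (Set.mem_Iio.2 (by omega)) (by norm_num)
  have hsupp : S.toFinset.card = 2 := by
    rw [hS, toFinset_cons, toFinset_replicate, if_neg (by omega),
      Finset.card_insert_of_notMem (by simpa using htwo), Finset.card_singleton]
  refine ⟨by rw [hsums]; exact zero_notMem_image_nsmul_Icc (by omega), ?_, hcard⟩
  rw [hcard, hsupp, hS, card_cons, card_replicate]

theorem stmt9 {G : Type*} [AddCommGroup G] [Fintype G] [DecidableEq G]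
    (m : ℕ) (hm : 3 ≤ m) (g : G) (hg : g ≠ 0) (hord : m + 2 ≤ addOrderOf g)
    (S : Multiset G) (hS : S = Multiset.replicate (m - 1) g + {2 • g}) :
    (0 : G) ∉ subSums S ∧
      (subSums S).ncard + 1 = Multiset.card S + S.toFinset.card ∧
      (subSums S).ncard = m + 1 :=
  stmt9_general m hm g hord S hS
end
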